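/- arXiv:2306.00806 — 2 statements merged into one kernel-verified Lean document; each statement's English description precedes it below -/
import Mathlib

section
/- Let $X$ be a set, $F : X \to \mathbb{R}$, and let $V$ be a finite-dimensional space of bounded functions on a measure space. For a bounded potential $v$, define $E[v] = \inf_{\sigma \in \mathcal{P}} (F[\sigma] - \int v\, d\sigma)$ and $E^{\Phi}[v] = \inf_{\sigma \in \mathcal{P}} (F^{\Phi}[\sigma] - \int v\, d\sigma)$, where $F^{\Phi}$ is the moment-relaxed functional satisfying $E[w] = E^{\Phi}[w]$ for all $w \in V$, all $\sigma \in \mathcal{P}$ have total mass $N$, and $F^\Phi \le F$. Then $|E[v] - E^{\Phi}[v]| \le 2N \min_{w \in V} \|v - w\|_{L^\infty}$. -/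
/-!
For a fixed state `σ` of mass `N`, the energy `G σ - ∫ v σ` moves by at most `N ‖v - w‖_∞` when
the potential changes from `v` to `w`; infima inherit this bound, so both `E` and `E^Φ` are
`N`-Lipschitz in the potential. Since they agree at any `w ∈ V`, the triangle inequality through
`w` gives `|E[v] - E^Φ[v]| ≤ 2 N ‖v - w‖_∞`.
-/

open MeasureTheory

noncomputable section

lemma csInf_image_le_csInf_image_add {α : Type*} {S : Set α} (hS : S.Nonempty) {f g : α → ℝ}
    {d : ℝ} (hfg : ∀ a ∈ S, f a ≤ g a + d) (hf : BddBelow (f '' S)) :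
    sInf (f '' S) ≤ sInf (g '' S) + d := by
  rw [← sub_le_iff_le_add]
  refine le_csInf (hS.image g) ?_
  rintro _ ⟨a, ha, rfl⟩
  linarith [csInf_le hf (Set.mem_image_of_mem f ha), hfg a ha]

lemma abs_csInf_image_sub_csInf_image_le {α : Type*} {S : Set α} (hS : S.Nonempty)
    {f g : α → ℝ} {d : ℝ} (hfg : ∀ a ∈ S, |f a - g a| ≤ d) (hf : BddBelow (f '' S))
    (hg : BddBelow (g '' S)) :
    |sInf (f '' S) - sInf (g '' S)| ≤ d := by
  have hfg' : ∀ a ∈ S, f a ≤ g a + d := fun a ha => by linarith [(abs_sub_le_iff.mp (hfg a ha)).1]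
  have hgf' : ∀ a ∈ S, g a ≤ f a + d := fun a ha => by linarith [(abs_sub_le_iff.mp (hfg a ha)).2]
  rw [abs_sub_le_iff]
  constructor
  · linarith [csInf_image_le_csInf_image_add hS hfg' hf]
  · linarith [csInf_image_le_csInf_image_add hS hgf' hg]

section Integral

variable {X : Type*} [MeasurableSpace X] {μ : Measure X}

lemma integrable_mul_of_bounded {v σ : X → ℝ} (hσ : Integrable σ μ) (hv : Measurable v)
    (hv_bdd : ∃ c, ∀ x, |v x| ≤ c) : Integrable (fun x => v x * σ x) μ :=
  hσ.bdd_mul hv.aestronglyMeasurable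
    (Filter.Eventually.of_forall fun x => hv_bdd.choose_spec x)

lemma abs_integral_mul_sub_integral_mul_le {v w σ : X → ℝ} {c : ℝ}
    (hv : Integrable (fun x => v x * σ x) μ) (hw : Integrable (fun x => w x * σ x) μ)
    (hσ : Integrable σ μ) (hσ_nonneg : ∀ x, 0 ≤ σ x) (hvw : ∀ x, |v x - w x| ≤ c) :
    |∫ x, v x * σ x ∂μ - ∫ x, w x * σ x ∂μ| ≤ c * ∫ x, σ x ∂μ := by
  have hpointwise : ∀ x, |v x * σ x - w x * σ x| ≤ c * σ x := fun x => by
    rw [← sub_mul, abs_mul, abs_of_nonneg (hσ_nonneg x)]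
    exact mul_le_mul_of_nonneg_right (hvw x) (hσ_nonneg x)
  calc |∫ x, v x * σ x ∂μ - ∫ x, w x * σ x ∂μ|
      = |∫ x, (v x * σ x - w x * σ x) ∂μ| := by rw [integral_sub hv hw]
    _ ≤ ∫ x, |v x * σ x - w x * σ x| ∂μ := abs_integral_le_integral_abs
    _ ≤ ∫ x, c * σ x ∂μ := integral_mono (hv.sub hw).abs (hσ.const_mul c) hpointwise
    _ = c * ∫ x, σ x ∂μ := integral_const_mul c _

end Integral

def groundStateEnergy {X : Type*} [MeasurableSpace X] (μ : Measure X) (P : Set (X → ℝ))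
    (G : (X → ℝ) → ℝ) (v : X → ℝ) : ℝ :=
  sInf ((fun σ => G σ - ∫ x, v x * σ x ∂μ) '' P)

lemma abs_groundStateEnergy_sub_le {X : Type*} [MeasurableSpace X] {μ : Measure X} {N : ℝ}
    {P : Set (X → ℝ)} (hP_ne : P.Nonempty)
    (hP : ∀ σ ∈ P, (∀ x, 0 ≤ σ x) ∧ Integrable σ μ ∧ ∫ x, σ x ∂μ = N) {G : (X → ℝ) → ℝ}
    {v w : X → ℝ} (hv : Measurable v) (hv_bdd : ∃ c, ∀ x, |v x| ≤ c) (hw : Measurable w)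
    (hw_bdd : ∃ c, ∀ x, |w x| ≤ c) {c : ℝ} (hvw : ∀ x, |v x - w x| ≤ c)
    (hGv : BddBelow ((fun σ => G σ - ∫ x, v x * σ x ∂μ) '' P))
    (hGw : BddBelow ((fun σ => G σ - ∫ x, w x * σ x ∂μ) '' P)) :
    |groundStateEnergy μ P G v - groundStateEnergy μ P G w| ≤ N * c := by
  refine abs_csInf_image_sub_csInf_image_le hP_ne (fun σ hσ => ?_) hGv hGw
  obtain ⟨hσ_nonneg, hσ, hσ_mass⟩ := hP σ hσ
  have := abs_integral_mul_sub_integral_mul_le (integrable_mul_of_bounded hσ hv hv_bdd)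
    (integrable_mul_of_bounded hσ hw hw_bdd) hσ hσ_nonneg hvw
  rw [sub_sub_sub_cancel_left, abs_sub_comm, mul_comm]
  rwa [hσ_mass] at this

theorem ground_state_energy_moment_error_general
    {X : Type*} [MeasurableSpace X] (μ : Measure X)
    (N : ℝ)
    (Pset : Set (X → ℝ)) (hPsetne : Pset.Nonempty)
    (hPset : ∀ σ ∈ Pset, (∀ x, 0 ≤ σ x) ∧ Integrable σ μ ∧ ∫ x, σ x ∂μ = N)
    (F FΦ : (X → ℝ) → ℝ)
    (V : Submodule ℝ (X → ℝ))
    (hVbdd : ∀ w ∈ V, Measurable w ∧ ∃ c, ∀ x, |w x| ≤ c)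
    (E EΦ : (X → ℝ) → ℝ)
    (hE : ∀ v : X → ℝ, E v = sInf ((fun σ => F σ - ∫ x, v x * σ x ∂μ) '' Pset))
    (hEΦ : ∀ v : X → ℝ, EΦ v = sInf ((fun σ => FΦ σ - ∫ x, v x * σ x ∂μ) '' Pset))
    (hbddF : ∀ v : X → ℝ, Measurable v → (∃ c, ∀ x, |v x| ≤ c) →
      BddBelow ((fun σ => F σ - ∫ x, v x * σ x ∂μ) '' Pset) ∧
      BddBelow ((fun σ => FΦ σ - ∫ x, v x * σ x ∂μ) '' Pset))
    (heq : ∀ w ∈ V, E w = EΦ w)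
    (v : X → ℝ) (hvmeas : Measurable v) (hvbdd : ∃ c, ∀ x, |v x| ≤ c) :
    ∀ w ∈ V, ∀ c : ℝ, (∀ x, |v x - w x| ≤ c) → |E v - EΦ v| ≤ 2 * N * c := by
  intro w hw c hvw
  obtain ⟨hwmeas, hwbdd⟩ := hVbdd w hw
  obtain ⟨hFv, hFΦv⟩ := hbddF v hvmeas hvbdd
  obtain ⟨hFw, hFΦw⟩ := hbddF w hwmeas hwbdd
  have hE_lip : |E v - E w| ≤ N * c := by
    rw [hE, hE]
    exact abs_groundStateEnergy_sub_le hPsetne hPset hvmeas hvbdd hwmeas hwbdd hvw hFv hFw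
  have hEΦ_lip : |EΦ v - EΦ w| ≤ N * c := by
    rw [hEΦ, hEΦ]
    exact abs_groundStateEnergy_sub_le hPsetne hPset hvmeas hvbdd hwmeas hwbdd hvw hFΦv hFΦw
  calc |E v - EΦ v| = |(E v - E w) - (EΦ v - EΦ w)| := by rw [heq w hw]; ring_nf
    _ ≤ |E v - E w| + |EΦ v - EΦ w| := abs_sub _ _
    _ ≤ 2 * N * c := by linarith

/-- Error bound on the ground state energy for the moment-constrained approximation:
`|E[v] - E^Φ[v]| ≤ 2N min_{w ∈ V} ‖v - w‖_∞`. -/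
theorem ground_state_energy_moment_error
    {X : Type*} [MeasurableSpace X] (μ : Measure X)
    (N : ℝ) (hN : 0 ≤ N)
    (Pset : Set (X → ℝ)) (hPsetne : Pset.Nonempty)
    (hPset : ∀ σ ∈ Pset, (∀ x, 0 ≤ σ x) ∧ Integrable σ μ ∧ ∫ x, σ x ∂μ = N)
    (F FΦ : (X → ℝ) → ℝ) (hle : ∀ σ ∈ Pset, FΦ σ ≤ F σ)
    (V : Submodule ℝ (X → ℝ))
    (hVbdd : ∀ w ∈ V, Measurable w ∧ ∃ c, ∀ x, |w x| ≤ c)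
    (E EΦ : (X → ℝ) → ℝ)
    (hE : ∀ v : X → ℝ, E v = sInf ((fun σ => F σ - ∫ x, v x * σ x ∂μ) '' Pset))
    (hEΦ : ∀ v : X → ℝ, EΦ v = sInf ((fun σ => FΦ σ - ∫ x, v x * σ x ∂μ) '' Pset))
    (hbddF : ∀ v : X → ℝ, Measurable v → (∃ c, ∀ x, |v x| ≤ c) →
      BddBelow ((fun σ => F σ - ∫ x, v x * σ x ∂μ) '' Pset) ∧
      BddBelow ((fun σ => FΦ σ - ∫ x, v x * σ x ∂μ) '' Pset))
    (heq : ∀ w ∈ V, E w = EΦ w)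
    (v : X → ℝ) (hvmeas : Measurable v) (hvbdd : ∃ c, ∀ x, |v x| ≤ c) :
    ∀ w ∈ V, ∀ c : ℝ, (∀ x, |v x - w x| ≤ c) → |E v - EΦ v| ≤ 2 * N * c :=
  ground_state_energy_moment_error_general μ N Pset hPsetne hPset F FΦ V hVbdd E EΦ hE hEΦ hbddF heq
    v hvmeas hvbdd

end
end

section
/- Let $\phi_1, \dots, \phi_N$ be functions in $L^2(\mathbb{R}^3)$ defined by $\phi^k(x) = \sqrt{\rho(x)/N}\, e^{i k f(x_1)}$ for $k = 1, \dots, N$, where $\rho \ge 0$ is integrable with $\int_{\mathbb{R}^3} \rho = N$, and $f(x_1) = \frac{2\pi}{N} \int_{-\infty}^{x_1} \int_{\mathbb{R}} \int_{\mathbb{R}} \rho(s, t, u)\, du\, dt\, ds$. Then $(\phi^k)_{1 \le k \le N}$ is an orthonormal family in $L^2(\mathbb{R}^3)$. -/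
open MeasureTheory

noncomputable section

/-!
Let `P` be the law of `x₁` under the probability density `ρ / N` and `F` its distribution
function, so that `f = 2π F`. As `ρ` is a density, `P` has no atoms; hence `F` is continuous and
pushes `P` forward to the uniform measure on `(0, 1]`. Therefore
`⟨φᵏ, φˡ⟩ = ∫ exp(2πi(l - k) F(s)) dP(s) = ∫₀¹ exp(2πi(l - k) y) dy = δₖₗ`.
-/

open ProbabilityTheory Set Filter Topology Complex

theorem Monotone.exists_preimage_Iic_eq_Iic {F : ℝ → ℝ} (hmono : Monotone F)
    (hcont : Continuous F) {y : ℝ} (hlow : ∃ t, F t ≤ y) (hhigh : ∃ t, y < F t) :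
    ∃ v, F v = y ∧ F ⁻¹' Iic y = Iic v := by
  obtain ⟨t₁, ht₁⟩ := hhigh
  have hbdd : BddAbove (F ⁻¹' Iic y) :=
    ⟨t₁, fun t ht ↦ le_of_not_gt fun h ↦ (ht.trans_lt ht₁).not_ge (hmono h.le)⟩
  have hmem : sSup (F ⁻¹' Iic y) ∈ F ⁻¹' Iic y :=
    (isClosed_le hcont continuous_const).csSup_mem hlow hbdd
  refine ⟨_, le_antisymm hmem ?_, Subset.antisymm (fun t ht ↦ le_csSup hbdd ht)
    fun t ht ↦ (hmono ht).trans hmem⟩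
  -- `F > y` to the right of the supremum, so `F ≥ y` at it by continuity
  refine _root_.ge_of_tendsto
    (hcont.continuousWithinAt (s := Ioi (sSup (F ⁻¹' Iic y)))).tendsto ?_
  filter_upwards [self_mem_nhdsWithin] with t ht
  exact le_of_not_ge fun h ↦ (not_le.2 ht) (le_csSup hbdd h)

section Cdf

variable (μ : Measure ℝ) [IsProbabilityMeasure μ] [NullSingletonClass μ]

theorem continuous_cdf : Continuous (cdf μ) := by
  refine continuous_iff_continuousAt.2 fun a ↦
    continuousAt_iff_continuous_left_right.2 ⟨?_, (cdf μ).right_continuous a⟩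
  rw [← continuousWithinAt_Iio_iff_Iic, (cdf μ).mono.continuousWithinAt_Iio_iff_leftLim_eq]
  have h := (cdf μ).measure_singleton a
  rw [measure_cdf, measure_singleton, eq_comm, ENNReal.ofReal_eq_zero, sub_nonpos] at h
  exact le_antisymm ((cdf μ).mono.leftLim_le le_rfl) h

theorem measure_cdf_preimage_Iic (y : ℝ) :
    μ (cdf μ ⁻¹' Iic y) = ENNReal.ofReal (min y 1) := by
  rcases le_or_gt 1 y with hy | hy
  · rw [min_eq_right hy, ENNReal.ofReal_one, ← measure_univ (μ := μ)]
    exact congrArg μ (eq_univ_of_forall fun t ↦ (cdf_le_one μ t).trans hy)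
  rw [min_eq_left hy.le]
  by_cases hlow : ∃ t, cdf μ t ≤ y
  · obtain ⟨v, hv, heq⟩ := (cdf μ).mono.exists_preimage_Iic_eq_Iic (continuous_cdf μ) hlow
      ((tendsto_cdf_atTop μ).eventually_const_lt hy).exists
    rw [heq, ← ofReal_cdf, hv]
  · have hy0 : y ≤ 0 := le_of_not_gt fun hy0 ↦
      hlow ((tendsto_cdf_atBot μ).eventually_le_const hy0).exists
    simp only [not_exists, not_le] at hlow
    rw [ENNReal.ofReal_of_nonpos hy0, ← measure_empty (μ := μ)]
    exact congrArg μ (eq_empty_of_forall_notMem fun t ht ↦ (hlow t).not_ge ht)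

theorem map_cdf_eq_restrict_Ioc : μ.map (cdf μ) = volume.restrict (Ioc 0 1) := by
  refine Measure.ext_of_Iic _ _ fun y ↦ ?_
  rw [Measure.map_apply (cdf μ).mono.measurable measurableSet_Iic, measure_cdf_preimage_Iic,
    Measure.restrict_apply measurableSet_Iic, inter_comm, Ioc_inter_Iic, Real.volume_Ioc,
    sub_zero, min_comm]

theorem integral_comp_cdf {E : Type*} [NormedAddCommGroup E] [NormedSpace ℝ E] {g : ℝ → E}
    (hg : AEStronglyMeasurable g (volume.restrict (Ioc 0 1))) :
    ∫ t, g (cdf μ t) ∂μ = ∫ y in Ioc 0 1, g y := by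
  rw [← map_cdf_eq_restrict_Ioc μ] at hg ⊢
  exact (integral_map (cdf μ).mono.measurable.aemeasurable hg).symm

end Cdf

section Marginal

variable {β : Type*} [MeasureSpace β]

def marginalFst (g : ℝ × β → ℝ) : Measure ℝ :=
  (volume.withDensity fun x ↦ ENNReal.ofReal (g x)).map Prod.fst

variable {g : ℝ × β → ℝ}

instance nullSingletonClass_marginalFst : NullSingletonClass (marginalFst g) := by
  refine ⟨fun a ↦ ?_⟩
  rw [marginalFst, Measure.map_apply measurable_fst (measurableSet_singleton a)]
  refine withDensity_absolutelyContinuous _ _ (nonpos_iff_eq_zero.1 ?_)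
  rw [← prod_univ, Measure.volume_eq_prod]
  simpa using Measure.prod_prod_le (μ := volume) (ν := (volume : Measure β)) {a} univ

theorem marginalFst_apply (hg : Integrable g) (hg0 : 0 ≤ g) {s : Set ℝ} (hs : MeasurableSet s) :
    marginalFst g s = ENNReal.ofReal (∫ x in Prod.fst ⁻¹' s, g x) := by
  rw [marginalFst, Measure.map_apply measurable_fst hs, withDensity_apply _ (measurable_fst hs),
    ofReal_integral_eq_lintegral_ofReal hg.restrict (ae_of_all _ hg0)]

theorem isProbabilityMeasure_marginalFst (hg : Integrable g) (hg0 : 0 ≤ g)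
    (hg1 : ∫ x, g x = 1) : IsProbabilityMeasure (marginalFst g) := by
  refine ⟨?_⟩
  rw [marginalFst_apply hg hg0 MeasurableSet.univ, preimage_univ, Measure.restrict_univ, hg1,
    ENNReal.ofReal_one]

theorem cdf_marginalFst [IsProbabilityMeasure (marginalFst g)] (hg : Integrable g) (hg0 : 0 ≤ g)
    (t : ℝ) : cdf (marginalFst g) t = ∫ x in {x | x.1 ≤ t}, g x := by
  rw [cdf_eq_real, measureReal_def, marginalFst_apply hg hg0 measurableSet_Iic,
    ENNReal.toReal_ofReal (setIntegral_nonneg (measurable_fst measurableSet_Iic) fun x _ ↦ hg0 x)]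
  rfl

theorem integral_marginalFst {E : Type*} [NormedAddCommGroup E] [NormedSpace ℝ E]
    (hg : AEMeasurable g) (hg0 : 0 ≤ g) {G : ℝ → E}
    (hG : AEStronglyMeasurable G (marginalFst g)) :
    ∫ t, G t ∂(marginalFst g) = ∫ x, g x • G x.1 := by
  rw [marginalFst, integral_map measurable_fst.aemeasurable hG,
    integral_withDensity_eq_integral_toReal_smul₀ hg.ennreal_ofReal
      (ae_of_all _ fun _ ↦ ENNReal.ofReal_lt_top)]
  simp only [ENNReal.toReal_ofReal (hg0 _)]

end Marginal

theorem integral_exp_two_pi_I_int_mul_Ioc (m : ℤ) :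
    ∫ y in Ioc (0 : ℝ) 1, exp (2 * Real.pi * I * m * y) = if m = 0 then 1 else 0 := by
  split_ifs with hm
  · simp [hm]
  have hc : 2 * Real.pi * I * m ≠ 0 := by simp [hm, Real.pi_ne_zero, I_ne_zero]
  rw [← intervalIntegral.integral_of_le zero_le_one, integral_exp_mul_complex hc]
  have hperiod : exp (2 * Real.pi * I * m * (1 : ℝ)) = 1 := by
    rw [ofReal_one, mul_one, mul_comm, exp_int_mul_two_pi_mul_I]
  rw [hperiod, ofReal_zero, mul_zero, exp_zero, sub_self, zero_div]

theorem lieb_orbitals_orthonormal_general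
    (N : ℕ)
    (ρ : ℝ × ℝ × ℝ → ℝ) (hρpos : ∀ x, 0 ≤ ρ x)
    (hρint : Integrable ρ volume) (hρmass : ∫ x, ρ x = (N : ℝ))
    (f : ℝ → ℝ)
    (hf : ∀ t : ℝ, f t = (2 * Real.pi / N) * ∫ p in {q : ℝ × ℝ × ℝ | q.1 ≤ t}, ρ p)
    (φ : Fin N → ℝ × ℝ × ℝ → ℂ)
    (hφ : ∀ (k : Fin N) (x : ℝ × ℝ × ℝ),
      φ k x = (Real.sqrt (ρ x / N) : ℂ) * Complex.exp (Complex.I * ((k : ℕ) + 1) * f x.1)) :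
    ∀ k l : Fin N,
      ∫ x, (starRingEnd ℂ) (φ k x) * φ l x = if k = l then 1 else 0 := by
  intro k l
  have hN : (0 : ℝ) < N := Nat.cast_pos.2 k.pos
  set g : ℝ × ℝ × ℝ → ℝ := fun x ↦ ρ x / N
  have hg0 : 0 ≤ g := fun x ↦ div_nonneg (hρpos x) hN.le
  have hgi : Integrable g := hρint.div_const _
  have := isProbabilityMeasure_marginalFst hgi hg0 (by rw [integral_div, hρmass, div_self hN.ne'])
  set F := cdf (marginalFst g)
  have hfF : ∀ t, f t = 2 * Real.pi * F t := fun t ↦ by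
    rw [hf, cdf_marginalFst hgi hg0, integral_div, mul_div_assoc', div_mul_eq_mul_div]
  set m : ℤ := (l : ℕ) - (k : ℕ)
  set G : ℝ → ℂ := fun y ↦ exp (2 * Real.pi * I * m * y)
  have hG : Continuous G := by fun_prop
  have hpt : ∀ x, (starRingEnd ℂ) (φ k x) * φ l x = g x • G (F x.1) := fun x ↦ by
    rw [hφ, hφ, map_mul, conj_ofReal, ← exp_conj, mul_mul_mul_comm, ← ofReal_mul,
      Real.mul_self_sqrt (hg0 x), ← exp_add, real_smul, hfF]
    congr 2
    simp only [map_mul, map_add, map_one, map_natCast, conj_I, conj_ofReal, m]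
    push_cast
    ring
  calc ∫ x, (starRingEnd ℂ) (φ k x) * φ l x = ∫ x, g x • G (F x.1) := by simp_rw [hpt]
    _ = ∫ t, G (F t) ∂(marginalFst g) :=
      (integral_marginalFst hgi.aemeasurable hg0
        (hG.comp (continuous_cdf _)).aestronglyMeasurable).symm
    _ = ∫ y in Ioc 0 1, G y := integral_comp_cdf _ hG.aestronglyMeasurable
    _ = if k = l then 1 else 0 := by
      rw [integral_exp_two_pi_I_int_mul_Ioc]
      simp [m, sub_eq_zero, Fin.val_inj, eq_comm (a := l)]

/-- **Lieb's orthonormal orbitals.** Given `ρ ≥ 0` integrable on `ℝ³` with `∫ ρ = N`, the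
orbitals `φᵏ(x) = √(ρ(x)/N) e^{i k f(x₁)}`, with
`f(x₁) = (2π/N) ∫_{s ≤ x₁} ∫∫ ρ(s,t,u) du dt ds`, form an orthonormal family in `L²`. -/
theorem lieb_orbitals_orthonormal
    (N : ℕ) (hN : 1 ≤ N)
    (ρ : ℝ × ℝ × ℝ → ℝ) (hρpos : ∀ x, 0 ≤ ρ x)
    (hρint : Integrable ρ volume) (hρmass : ∫ x, ρ x = (N : ℝ))
    (f : ℝ → ℝ)
    (hf : ∀ t : ℝ, f t = (2 * Real.pi / N) * ∫ p in {q : ℝ × ℝ × ℝ | q.1 ≤ t}, ρ p)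
    (φ : Fin N → ℝ × ℝ × ℝ → ℂ)
    (hφ : ∀ (k : Fin N) (x : ℝ × ℝ × ℝ),
      φ k x = (Real.sqrt (ρ x / N) : ℂ) * Complex.exp (Complex.I * ((k : ℕ) + 1) * f x.1)) :
    ∀ k l : Fin N,
      ∫ x, (starRingEnd ℂ) (φ k x) * φ l x = if k = l then 1 else 0 :=
  lieb_orbitals_orthonormal_general N ρ hρpos hρint hρmass f hf φ hφ

end
end
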